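/- arXiv:1710.04967 — 2 statements merged into one kernel-verified Lean document; each statement's English description precedes it below -/
import Mathlib

section
/- For complex q with 0 < |q| < 1, nonnegative integer s, and complex t, z with |t| and |tzq^s| less than 1, the generating function of the q-Cesàro polynomials satisfies ∑_{n=0}^∞ g_n^{(s)}(z;q) t^n = 1 / ((1 - t z q^s) · (t;q)_{s+1}), where g_n^{(s)}(z;q) = ∑_{k=0}^n [k+s choose s]_q (z q^s)^{n-k}. -/
/-- The finite q-Pochhammer symbol `(a;q)_n = ∏_{j=0}^{n-1} (1 - a q^j)`. -/
noncomputable def qPoch (a q : ℂ) (n : ℕ) : ℂ :=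
  ∏ j ∈ Finset.range n, (1 - a * q ^ j)

/-- The q-binomial coefficient `[m choose r]_q = (q;q)_m/((q;q)_r (q;q)_{m-r})`. -/
noncomputable def qBinom (q : ℂ) (m r : ℕ) : ℂ :=
  qPoch q q m / (qPoch q q r * qPoch q q (m - r))

/-- The q-Cesàro polynomial `g_n^{(s)}(z;q) = ∑_{k=0}^n [k+s choose s]_q (zq^s)^{n-k}`. -/
noncomputable def qCesaro (q z : ℂ) (s n : ℕ) : ℂ :=
  ∑ k ∈ Finset.range (n + 1), qBinom q (k + s) s * (z * q ^ s) ^ (n - k)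

/-! By induction on `s`, the q-Pascal rule `[n+s+1 choose s+1]_q = ∑_{k ≤ n} q^k [k+s choose s]_q`
makes the series `∑_k [k+s+1 choose s+1]_q t^k` the Cauchy product of the level-`s` series at `qt`
with the geometric series in `t`; since `(t;q)_{s+2} = (1 - t)(qt;q)_{s+1}` this gives the
q-binomial theorem `∑_k [k+s choose s]_q t^k = 1/(t;q)_{s+1}`, absolute convergence being carried
along for the next Cauchy product. The generating function of the q-Cesàro polynomials is the
Cauchy product of this series with the geometric series in `tzq^s`. -/

open Finset

theorem sum_range_mul_pow_sub_mul_pow {R : Type*} [CommSemiring R] (a : ℕ → R) (x y : R)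
    (n : ℕ) :
    (∑ k ∈ range (n + 1), a k * y ^ (n - k)) * x ^ n =
      ∑ k ∈ range (n + 1), a k * x ^ k * (x * y) ^ (n - k) := by
  rw [sum_mul]
  refine sum_congr rfl fun k hk ↦ ?_
  rw [mul_pow, ← pow_mul_pow_sub x (Nat.le_of_lt_succ (mem_range.mp hk))]
  ring

section CauchyGeometric

variable {𝕜 : Type*} [NormedField 𝕜] {a : ℕ → 𝕜} {x y : 𝕜}

theorem summable_norm_sum_range_mul_pow_sub_mul_pow (ha : Summable fun k ↦ ‖a k * x ^ k‖)
    (hxy : ‖x * y‖ < 1) :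
    Summable fun n ↦ ‖(∑ k ∈ range (n + 1), a k * y ^ (n - k)) * x ^ n‖ := by
  simp_rw [sum_range_mul_pow_sub_mul_pow]
  refine summable_norm_sum_mul_range_of_summable_norm ha ?_
  simpa only [norm_pow] using summable_geometric_of_lt_one (norm_nonneg _) hxy

theorem hasSum_sum_range_mul_pow_sub_mul_pow [CompleteSpace 𝕜] {A : 𝕜}
    (ha : Summable fun k ↦ ‖a k * x ^ k‖) (hA : HasSum (fun k ↦ a k * x ^ k) A)
    (hxy : ‖x * y‖ < 1) :
    HasSum (fun n ↦ (∑ k ∈ range (n + 1), a k * y ^ (n - k)) * x ^ n) (A * (1 - x * y)⁻¹) := by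
  have hgeom := hasSum_geometric_of_norm_lt_one hxy
  simp_rw [sum_range_mul_pow_sub_mul_pow]
  rw [← hA.tsum_eq, ← hgeom.tsum_eq]
  refine hasSum_sum_range_mul_of_summable_norm ha ?_
  simpa only [norm_pow] using summable_geometric_of_lt_one (norm_nonneg _) hxy

end CauchyGeometric

@[simp]
theorem qPoch_zero (a q : ℂ) : qPoch a q 0 = 1 :=
  prod_range_zero _

theorem qPoch_succ (a q : ℂ) (n : ℕ) : qPoch a q (n + 1) = qPoch a q n * (1 - a * q ^ n) :=
  prod_range_succ _ _

theorem qPoch_succ' (a q : ℂ) (n : ℕ) : qPoch a q (n + 1) = (1 - a) * qPoch (a * q) q n := by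
  simp only [qPoch, prod_range_succ', pow_zero, mul_one, pow_succ', mul_assoc]
  rw [mul_comm]

theorem qPoch_ne_zero {a q : ℂ} (ha : ‖a‖ < 1) (hq : ‖q‖ ≤ 1) (n : ℕ) : qPoch a q n ≠ 0 := by
  refine prod_ne_zero_iff.mpr fun j _ ↦ sub_ne_zero.mpr fun h ↦ ?_
  have : ‖a * q ^ j‖ < 1 := by
    rw [norm_mul, norm_pow]
    exact mul_lt_one_of_nonneg_of_lt_one_left (norm_nonneg a) ha (pow_le_one₀ (norm_nonneg q) hq)
  simp [← h] at this

section QBinom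

variable {q : ℂ} (hq : ‖q‖ < 1)
include hq

theorem qBinom_zero (m : ℕ) : qBinom q m 0 = 1 := by
  simp [qBinom, qPoch_ne_zero hq hq.le m]

theorem qBinom_self (m : ℕ) : qBinom q m m = 1 := by
  simp [qBinom, qPoch_ne_zero hq hq.le m]

theorem qBinom_pascal (n s : ℕ) :
    qBinom q (n + 1 + (s + 1)) (s + 1) =
      qBinom q (n + (s + 1)) (s + 1) + qBinom q (n + 1 + s) s * q ^ (n + 1) := by
  have hs := right_ne_zero_of_mul (qPoch_succ q q s ▸ qPoch_ne_zero hq hq.le (s + 1))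
  have hn := right_ne_zero_of_mul (qPoch_succ q q n ▸ qPoch_ne_zero hq hq.le (n + 1))
  simp only [qBinom, Nat.add_sub_cancel]
  rw [show n + 1 + (s + 1) = n + 1 + s + 1 by ring, show n + (s + 1) = n + 1 + s by ring,
    qPoch_succ q q (n + 1 + s), qPoch_succ q q s, qPoch_succ q q n]
  field_simp
  ring

theorem qBinom_add_succ_eq_sum (n s : ℕ) :
    qBinom q (n + (s + 1)) (s + 1) = ∑ k ∈ range (n + 1), qBinom q (k + s) s * q ^ k := by
  induction n with
  | zero => simp [qBinom_self hq]
  | succ n ih => rw [qBinom_pascal hq, ih, sum_range_succ _ (n + 1)]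

end QBinom

theorem summable_norm_and_hasSum_qBinom_mul_pow {q : ℂ} (hq : ‖q‖ < 1) (s : ℕ) {t : ℂ}
    (ht : ‖t‖ < 1) :
    (Summable fun k ↦ ‖qBinom q (k + s) s * t ^ k‖) ∧
      HasSum (fun k ↦ qBinom q (k + s) s * t ^ k) (qPoch t q (s + 1))⁻¹ := by
  induction s generalizing t with
  | zero =>
    simp only [Nat.add_zero, qBinom_zero hq, one_mul, qPoch_succ, qPoch_zero, pow_zero, mul_one]
    exact ⟨by simpa only [norm_pow] using summable_geometric_of_lt_one (norm_nonneg t) ht,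
      hasSum_geometric_of_norm_lt_one ht⟩
  | succ s ih =>
    have hqt : ‖q * t‖ < 1 := by
      rw [norm_mul]
      exact mul_lt_one_of_nonneg_of_lt_one_left (norm_nonneg q) hq ht.le
    obtain ⟨hsum, hhas⟩ := ih hqt
    simp_rw [mul_pow, ← mul_assoc] at hsum hhas
    have ht' : ‖t * 1‖ < 1 := by rwa [mul_one]
    have hrec (n : ℕ) : qBinom q (n + (s + 1)) (s + 1) * t ^ n =
        (∑ k ∈ range (n + 1), qBinom q (k + s) s * q ^ k * 1 ^ (n - k)) * t ^ n := by
      simp only [one_pow, mul_one, qBinom_add_succ_eq_sum hq]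
    simp_rw [hrec]
    rw [qPoch_succ', mul_inv, mul_comm t q, mul_comm (1 - t)⁻¹]
    have hcauchy := hasSum_sum_range_mul_pow_sub_mul_pow hsum hhas ht'
    rw [mul_one] at hcauchy
    exact ⟨summable_norm_sum_range_mul_pow_sub_mul_pow hsum ht', hcauchy⟩

theorem qCesaro_genfun_general (q z t : ℂ)
    (hq1 : ‖q‖ < 1) (s : ℕ) (ht : ‖t‖ < 1)
    (htz : ‖t * z * q ^ s‖ < 1) :
    ∑' n : ℕ, qCesaro q z s n * t ^ n =
      1 / ((1 - t * z * q ^ s) * qPoch t q (s + 1)) := by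
  obtain ⟨hsum, hhas⟩ := summable_norm_and_hasSum_qBinom_mul_pow hq1 s ht
  rw [mul_assoc] at htz ⊢
  unfold qCesaro
  rw [(hasSum_sum_range_mul_pow_sub_mul_pow hsum hhas htz).tsum_eq, one_div, mul_inv, mul_comm]

/-- Generating function of the q-Cesàro polynomials:
`∑_{n=0}^∞ g_n^{(s)}(z;q) t^n = 1/((1 - tzq^s)(t;q)_{s+1})`. -/
theorem qCesaro_genfun (q z t : ℂ) (hq0 : 0 < ‖q‖)
    (hq1 : ‖q‖ < 1) (s : ℕ) (ht : ‖t‖ < 1)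
    (htz : ‖t * z * q ^ s‖ < 1) :
    ∑' n : ℕ, qCesaro q z s n * t ^ n =
      1 / ((1 - t * z * q ^ s) * qPoch t q (s + 1)) :=
  qCesaro_genfun_general q z t hq1 s ht htz
end

section
/- For natural numbers m, j and complex t with |t| < 1, ∑_{n=0}^∞ B_m^j(−2n−1−j) t^n = (1/(1−t)) · ₂F₁(−m, m+1; j+1; −t/(1−t)), where B_m^j(z) = ₃F₂(−m, m+1, (z+j+1)/2; 1, j+1; 1) is the Pasternack polynomial, so B_m^j(−2n−1−j) = ∑_{k=0}^m ((−m)_k (m+1)_k (−n)_k / (k! k! (j+1)_k)). -/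
/-!
Since `(-n)_k = (-1)^k k! C(n, k)`, the value `B_m^j(-2n-1-j)` is the finite combination
`∑_k (-1)^k c_k C(n, k)` of binomial coefficients in `n`, where `c_k` are the coefficients of the
`₂F₁`. Summing term by term with `∑_n C(n, k) t^n = t^k / (1 - t)^(k+1)` gives
`(1 / (1 - t)) ∑_k c_k (-t / (1 - t))^k`.
-/

/-- The rising factorial (Pochhammer symbol) `(a)_k = a(a+1)⋯(a+k-1)`. -/
noncomputable def risingFactorial (a : ℂ) (k : ℕ) : ℂ :=
  ∏ i ∈ Finset.range k, (a + i)

/-- The Pasternack polynomial `B_m^j` evaluated at `z = −2n−1−j`: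
`B_m^j(−2n−1−j) = ∑_{k=0}^m (−m)_k (m+1)_k (−n)_k / (k! k! (j+1)_k)`. -/
noncomputable def pasternackEval (m j n : ℕ) : ℂ :=
  ∑ k ∈ Finset.range (m + 1),
    risingFactorial (-(m : ℂ)) k * risingFactorial ((m : ℂ) + 1) k *
      risingFactorial (-(n : ℂ)) k /
      ((k.factorial : ℂ) * (k.factorial : ℂ) * risingFactorial ((j : ℂ) + 1) k)

open Finset Nat

section BinomialGeneratingFunction

variable {𝕜 : Type*} [NormedField 𝕜] {t : 𝕜}

theorem hasSum_choose_mul_geometric (k : ℕ) (ht : ‖t‖ < 1) :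
    HasSum (fun n : ℕ => (n.choose k : 𝕜) * t ^ n) (t ^ k / (1 - t) ^ (k + 1)) := by
  have shifted : HasSum (fun n : ℕ => ((n + k).choose k : 𝕜) * t ^ (n + k))
      (1 / (1 - t) ^ (k + 1) * t ^ k) := by
    simpa only [pow_add, mul_assoc] using
      (hasSum_choose_mul_geometric_of_norm_lt_one k ht).mul_right (t ^ k)
  have initial_terms_vanish : ∑ n ∈ range k, (n.choose k : 𝕜) * t ^ n = 0 :=
    sum_eq_zero fun n hn => by rw [choose_eq_zero_of_lt (mem_range.1 hn), cast_zero, zero_mul]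
  rw [hasSum_nat_add_iff (f := fun n : ℕ => (n.choose k : 𝕜) * t ^ n), initial_terms_vanish,
    add_zero] at shifted
  rwa [div_eq_mul_one_div, mul_comm]

theorem hasSum_sum_choose_mul_geometric (a : ℕ → 𝕜) (N : ℕ) (ht : ‖t‖ < 1) :
    HasSum (fun n : ℕ => (∑ k ∈ range N, a k * n.choose k) * t ^ n)
      (1 / (1 - t) * ∑ k ∈ range N, a k * (t / (1 - t)) ^ k) := by
  have value_eq : ∑ k ∈ range N, a k * (t ^ k / (1 - t) ^ (k + 1)) =
      1 / (1 - t) * ∑ k ∈ range N, a k * (t / (1 - t)) ^ k := by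
    rw [mul_sum]
    refine sum_congr rfl fun k _ => ?_
    rw [pow_succ, ← div_div, div_pow]
    ring
  rw [← value_eq]
  simpa only [sum_mul, mul_assoc] using
    hasSum_sum fun k (_ : k ∈ range N) => (hasSum_choose_mul_geometric k ht).mul_left (a k)

end BinomialGeneratingFunction

theorem risingFactorial_eq_eval_ascPochhammer (a : ℂ) (k : ℕ) :
    risingFactorial a k = (ascPochhammer ℂ k).eval a := by
  induction k with
  | zero => simp [risingFactorial]
  | succ k ih =>
    rw [risingFactorial, prod_range_succ, ← risingFactorial, ih, ascPochhammer_succ_eval]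

theorem risingFactorial_neg_natCast (n k : ℕ) :
    risingFactorial (-(n : ℂ)) k = (-1) ^ k * k ! * n.choose k := by
  rw [risingFactorial_eq_eval_ascPochhammer, ascPochhammer_eval_neg_eq_descPochhammer,
    descPochhammer_eval_eq_descFactorial, descFactorial_eq_factorial_mul_choose, cast_mul,
    mul_assoc]

noncomputable def hypergeometricCoeff (a b c : ℂ) (k : ℕ) : ℂ :=
  risingFactorial a k * risingFactorial b k / (risingFactorial c k * k !)

theorem pasternackEval_eq_sum_choose (m j n : ℕ) :
    pasternackEval m j n = ∑ k ∈ range (m + 1),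
      (-1) ^ k * hypergeometricCoeff (-m) (m + 1) (j + 1) k * n.choose k := by
  refine sum_congr rfl fun k _ => ?_
  have hk : (k ! : ℂ) ≠ 0 := cast_ne_zero.2 k.factorial_ne_zero
  rw [hypergeometricCoeff, risingFactorial_neg_natCast n k]
  field_simp

/-- `∑_{n=0}^∞ B_m^j(−2n−1−j) t^n = (1/(1−t)) ₂F₁(−m, m+1; j+1; −t/(1−t))`,
the ₂F₁ being a terminating hypergeometric sum. -/
theorem pasternack_eval_genfun (m j : ℕ) (t : ℂ) (ht : ‖t‖ < 1) :
    ∑' n : ℕ, pasternackEval m j n * t ^ n =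
      (1 / (1 - t)) *
        ∑ k ∈ Finset.range (m + 1),
          (risingFactorial (-(m : ℂ)) k * risingFactorial ((m : ℂ) + 1) k /
            (risingFactorial ((j : ℂ) + 1) k * (k.factorial : ℂ))) *
            (-t / (1 - t)) ^ k := by
  simp_rw [pasternackEval_eq_sum_choose]
  rw [(hasSum_sum_choose_mul_geometric _ (m + 1) ht).tsum_eq]
  congr 1
  refine sum_congr rfl fun k _ => ?_
  rw [neg_div, neg_pow, hypergeometricCoeff]
  ring
end
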